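/- (Blindness of score matching to mixing proportions.) Fix μ₁ < μ₂ ∈ ℝ and two mixing proportions π, π' ∈ (0,1) with π ≠ π'. Writing p_{σ,π}(x) = π φ_{μ₁,σ}(x) + (1−π) φ_{μ₂,σ}(x), the Fisher divergence between the two mixtures that differ only in their mixing proportion vanishes: J(p_{σ,π} ‖ p_{σ,π'}) → 0 as σ → 0⁺. -/

import Mathlib

open MeasureTheory Filter

/-- Gaussian density with mean `μ` and standard deviation `σ`. -/
noncomputable def gaussian (μ σ : ℝ) (x : ℝ) : ℝ :=
  (σ * Real.sqrt (2 * Real.pi))⁻¹ * Real.exp (-(x - μ) ^ 2 / (2 * σ ^ 2))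

/-- The score of a density `ρ`: the derivative of its log. -/
noncomputable def score (ρ : ℝ → ℝ) (x : ℝ) : ℝ :=
  deriv (fun y => Real.log (ρ y)) x

/-- Fisher divergence between densities `q` and `p`. -/
noncomputable def fisherDiv (q p : ℝ → ℝ) : ℝ :=
  ∫ x : ℝ, q x * (score q x - score p x) ^ 2

/-!
The scores of the two mixtures differ by `(w - w') (μ₁ - μ₂) σ⁻² φ₁ φ₂ / (q p)`, where `φᵢ` are
the component densities and `q`, `p` the mixtures, so the Fisher integrand is a constant times
`σ⁻⁴ (φ₁ φ₂)² / (q p²)`. Both mixtures dominate a fixed multiple of `max φ₁ φ₂`, which bounds the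
integrand by a constant times `σ⁻⁴ √(φ₁ φ₂)`; and `√(φ₁ φ₂)` is the Gaussian density centred at
the midpoint times `exp (-(μ₁ - μ₂)² / (8σ²))`. Hence `J ≤ C σ⁻⁴ exp (-(μ₁ - μ₂)² / (8σ²)) → 0`.
-/

open Real Set Topology

theorem score_eq_of_hasDerivAt {ρ : ℝ → ℝ} {ρ' x : ℝ} (h : HasDerivAt ρ ρ' x) (hx : ρ x ≠ 0) :
    score ρ x = ρ' / ρ x :=
  (h.log hx).deriv

theorem fisherDiv_nonneg {q : ℝ → ℝ} (hq : 0 ≤ q) (p : ℝ → ℝ) : 0 ≤ fisherDiv q p :=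
  integral_nonneg fun x => mul_nonneg (hq x) (sq_nonneg _)

theorem HasDerivAt.convex_comb {f g : ℝ → ℝ} {f' g' x : ℝ} (hf : HasDerivAt f f' x)
    (hg : HasDerivAt g g' x) (a : ℝ) :
    HasDerivAt (fun y => a * f y + (1 - a) * g y) (a * f' + (1 - a) * g') x :=
  (hf.const_mul a).add (hg.const_mul (1 - a))

theorem score_convex_comb_sub_score_convex_comb {f g : ℝ → ℝ} {f' g' x : ℝ} (a b : ℝ)
    (hf : HasDerivAt f f' x) (hg : HasDerivAt g g' x)
    (hq : a * f x + (1 - a) * g x ≠ 0) (hp : b * f x + (1 - b) * g x ≠ 0) :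
    score (fun y => a * f y + (1 - a) * g y) x - score (fun y => b * f y + (1 - b) * g y) x =
      (a - b) * (f' * g x - f x * g') /
        ((a * f x + (1 - a) * g x) * (b * f x + (1 - b) * g x)) := by
  rw [score_eq_of_hasDerivAt (hf.convex_comb hg a) hq,
    score_eq_of_hasDerivAt (hf.convex_comb hg b) hp, div_sub_div _ _ hq hp]
  ring

theorem min_mul_max_le_convex_comb {a f g : ℝ} (ha₀ : 0 ≤ a) (ha₁ : a ≤ 1) (hf : 0 ≤ f)
    (hg : 0 ≤ g) : min a (1 - a) * max f g ≤ a * f + (1 - a) * g := by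
  rcases le_total f g with h | h
  · rw [max_eq_right h]; nlinarith [min_le_left a (1 - a), min_le_right a (1 - a)]
  · rw [max_eq_left h]; nlinarith [min_le_left a (1 - a), min_le_right a (1 - a)]

theorem mul_sq_le_sqrt_mul_mul_max_pow_three {f g : ℝ} (hf : 0 ≤ f) (hg : 0 ≤ g) :
    (f * g) ^ 2 ≤ √(f * g) * max f g ^ 3 := by
  have hs : √(f * g) ≤ max f g :=
    (sqrt_le_left (by positivity)).2 (by nlinarith [le_max_left f g, le_max_right f g])
  calc (f * g) ^ 2 = √(f * g) * √(f * g) ^ 3 := by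
        rw [← pow_succ', show √(f * g) ^ (3 + 1) = (√(f * g) ^ 2) ^ 2 by ring,
          sq_sqrt (by positivity)]
    _ ≤ √(f * g) * max f g ^ 3 := by gcongr

theorem mul_sq_div_convex_comb_le {a b f g : ℝ} (ha : a ∈ Ioo 0 1) (hb : b ∈ Ioo 0 1) (hf : 0 < f)
    (hg : 0 < g) :
    (f * g) ^ 2 / ((a * f + (1 - a) * g) * (b * f + (1 - b) * g) ^ 2) ≤
      √(f * g) / (min a (1 - a) * min b (1 - b) ^ 2) := by
  obtain ⟨ha₀, ha₁⟩ := ha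
  obtain ⟨hb₀, hb₁⟩ := hb
  have hq := min_mul_max_le_convex_comb ha₀.le ha₁.le hf.le hg.le
  have hp := min_mul_max_le_convex_comb hb₀.le hb₁.le hf.le hg.le
  have hma : 0 < min a (1 - a) := lt_min ha₀ (by linarith)
  have hmb : 0 < min b (1 - b) := lt_min hb₀ (by linarith)
  have hM : 0 < max f g := lt_max_of_lt_left hf
  have hq₀ : 0 < a * f + (1 - a) * g := (mul_pos hma hM).trans_le hq
  have hp₀ : 0 < b * f + (1 - b) * g := (mul_pos hmb hM).trans_le hp
  rw [div_le_div_iff₀ (by positivity) (by positivity)]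
  calc (f * g) ^ 2 * (min a (1 - a) * min b (1 - b) ^ 2)
      ≤ √(f * g) * max f g ^ 3 * (min a (1 - a) * min b (1 - b) ^ 2) := by
        gcongr; exact mul_sq_le_sqrt_mul_mul_max_pow_three hf.le hg.le
    _ = √(f * g) * (min a (1 - a) * max f g * (min b (1 - b) * max f g) ^ 2) := by ring
    _ ≤ √(f * g) * ((a * f + (1 - a) * g) * (b * f + (1 - b) * g) ^ 2) := by gcongr

theorem gaussian_pos (μ : ℝ) {σ : ℝ} (hσ : 0 < σ) (x : ℝ) : 0 < gaussian μ σ x := by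
  unfold gaussian
  positivity

theorem hasDerivAt_gaussian (μ σ x : ℝ) :
    HasDerivAt (gaussian μ σ) (gaussian μ σ x * (-(x - μ) / σ ^ 2)) x := by
  refine (((((hasDerivAt_id x).sub_const μ).pow 2).neg.div_const (2 * σ ^ 2)).exp.const_mul
    (σ * √(2 * π))⁻¹).congr_deriv ?_
  simp only [gaussian, id, Pi.pow_apply, Pi.neg_apply]
  ring

theorem gaussian_eq_gaussianPDFReal (μ : ℝ) {σ : ℝ} (hσ : 0 < σ) :
    gaussian μ σ = ProbabilityTheory.gaussianPDFReal μ (σ ^ 2).toNNReal := by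
  funext x
  rw [gaussian, ProbabilityTheory.gaussianPDFReal, Real.coe_toNNReal _ (sq_nonneg σ),
    sqrt_mul' _ (sq_nonneg σ), sqrt_sq hσ.le, mul_comm σ]

theorem integrable_gaussian (μ : ℝ) {σ : ℝ} (hσ : 0 < σ) : Integrable (gaussian μ σ) := by
  rw [gaussian_eq_gaussianPDFReal μ hσ]
  exact ProbabilityTheory.integrable_gaussianPDFReal μ _

theorem integral_gaussian_eq_one (μ : ℝ) {σ : ℝ} (hσ : 0 < σ) : ∫ x, gaussian μ σ x = 1 := by
  rw [gaussian_eq_gaussianPDFReal μ hσ]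
  exact ProbabilityTheory.integral_gaussianPDFReal_eq_one μ (by simpa using hσ.ne')

theorem sqrt_gaussian_mul_gaussian (μ₁ μ₂ : ℝ) {σ : ℝ} (hσ : 0 < σ) (x : ℝ) :
    √(gaussian μ₁ σ x * gaussian μ₂ σ x) =
      gaussian ((μ₁ + μ₂) / 2) σ x * exp (-(μ₁ - μ₂) ^ 2 / (8 * σ ^ 2)) := by
  have h : gaussian μ₁ σ x * gaussian μ₂ σ x =
      (gaussian ((μ₁ + μ₂) / 2) σ x * exp (-(μ₁ - μ₂) ^ 2 / (8 * σ ^ 2))) ^ 2 := by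
    have hexp : -(x - μ₁) ^ 2 / (2 * σ ^ 2) + -(x - μ₂) ^ 2 / (2 * σ ^ 2) =
        (-(x - (μ₁ + μ₂) / 2) ^ 2 / (2 * σ ^ 2) + -(μ₁ - μ₂) ^ 2 / (8 * σ ^ 2)) +
          (-(x - (μ₁ + μ₂) / 2) ^ 2 / (2 * σ ^ 2) + -(μ₁ - μ₂) ^ 2 / (8 * σ ^ 2)) := by
      field_simp
      ring
    calc gaussian μ₁ σ x * gaussian μ₂ σ x = (σ * √(2 * π))⁻¹ ^ 2 *
          exp (-(x - μ₁) ^ 2 / (2 * σ ^ 2) + -(x - μ₂) ^ 2 / (2 * σ ^ 2)) := by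
          rw [exp_add, gaussian, gaussian]; ring
      _ = _ := by rw [hexp, exp_add, exp_add, gaussian]; ring
  rw [h, sqrt_sq (by have := gaussian_pos ((μ₁ + μ₂) / 2) hσ x; positivity)]

theorem convex_comb_gaussian_pos {a : ℝ} (ha : a ∈ Ioo 0 1) (μ₁ μ₂ : ℝ) {σ : ℝ} (hσ : 0 < σ)
    (x : ℝ) : 0 < a * gaussian μ₁ σ x + (1 - a) * gaussian μ₂ σ x := by
  have := gaussian_pos μ₁ hσ x
  have := gaussian_pos μ₂ hσ x
  have := sub_pos.2 ha.2
  have := ha.1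
  positivity

theorem fisher_integrand_convex_comb_gaussian_le {a b : ℝ} (ha : a ∈ Ioo 0 1) (hb : b ∈ Ioo 0 1)
    (μ₁ μ₂ : ℝ) {σ : ℝ} (hσ : 0 < σ) (x : ℝ) :
    (a * gaussian μ₁ σ x + (1 - a) * gaussian μ₂ σ x) *
        (score (fun y => a * gaussian μ₁ σ y + (1 - a) * gaussian μ₂ σ y) x -
          score (fun y => b * gaussian μ₁ σ y + (1 - b) * gaussian μ₂ σ y) x) ^ 2 ≤
      ((a - b) * (μ₁ - μ₂)) ^ 2 / (min a (1 - a) * min b (1 - b) ^ 2) *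
        ((σ ^ 4)⁻¹ * exp (-((μ₁ - μ₂) ^ 2 / 8) / σ ^ 2)) * gaussian ((μ₁ + μ₂) / 2) σ x := by
  have hq := convex_comb_gaussian_pos ha μ₁ μ₂ hσ x
  have hp := convex_comb_gaussian_pos hb μ₁ μ₂ hσ x
  rw [score_convex_comb_sub_score_convex_comb a b (hasDerivAt_gaussian μ₁ σ x)
    (hasDerivAt_gaussian μ₂ σ x) hq.ne' hp.ne']
  calc _ = ((a - b) * (μ₁ - μ₂)) ^ 2 / σ ^ 4 * ((gaussian μ₁ σ x * gaussian μ₂ σ x) ^ 2 /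
        ((a * gaussian μ₁ σ x + (1 - a) * gaussian μ₂ σ x) *
          (b * gaussian μ₁ σ x + (1 - b) * gaussian μ₂ σ x) ^ 2)) := by
        field_simp
        ring
    _ ≤ ((a - b) * (μ₁ - μ₂)) ^ 2 / σ ^ 4 *
        (√(gaussian μ₁ σ x * gaussian μ₂ σ x) / (min a (1 - a) * min b (1 - b) ^ 2)) :=
        mul_le_mul_of_nonneg_left
          (mul_sq_div_convex_comb_le ha hb (gaussian_pos μ₁ hσ x) (gaussian_pos μ₂ hσ x))
          (by positivity)
    _ = _ := by
        rw [sqrt_gaussian_mul_gaussian μ₁ μ₂ hσ, neg_div, neg_div, div_div, mul_comm 8]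
        ring

theorem fisherDiv_convex_comb_gaussian_le {a b : ℝ} (ha : a ∈ Ioo 0 1) (hb : b ∈ Ioo 0 1)
    (μ₁ μ₂ : ℝ) {σ : ℝ} (hσ : 0 < σ) :
    fisherDiv (fun y => a * gaussian μ₁ σ y + (1 - a) * gaussian μ₂ σ y)
        (fun y => b * gaussian μ₁ σ y + (1 - b) * gaussian μ₂ σ y) ≤
      ((a - b) * (μ₁ - μ₂)) ^ 2 / (min a (1 - a) * min b (1 - b) ^ 2) *
        ((σ ^ 4)⁻¹ * exp (-((μ₁ - μ₂) ^ 2 / 8) / σ ^ 2)) := by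
  calc _ ≤ ∫ x, ((a - b) * (μ₁ - μ₂)) ^ 2 / (min a (1 - a) * min b (1 - b) ^ 2) *
          ((σ ^ 4)⁻¹ * exp (-((μ₁ - μ₂) ^ 2 / 8) / σ ^ 2)) * gaussian ((μ₁ + μ₂) / 2) σ x :=
        integral_mono_of_nonneg
          (ae_of_all _ fun x => mul_nonneg (convex_comb_gaussian_pos ha μ₁ μ₂ hσ x).le
            (sq_nonneg _))
          ((integrable_gaussian _ hσ).const_mul _)
          (ae_of_all _ (fisher_integrand_convex_comb_gaussian_le ha hb μ₁ μ₂ hσ))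
    _ = _ := by rw [integral_const_mul, integral_gaussian_eq_one _ hσ, mul_one]

theorem tendsto_inv_pow_four_mul_exp_neg_div_sq {c : ℝ} (hc : 0 < c) :
    Tendsto (fun σ : ℝ => (σ ^ 4)⁻¹ * exp (-c / σ ^ 2)) (𝓝[>] 0) (𝓝 0) := by
  have := (tendsto_rpow_mul_exp_neg_mul_atTop_nhds_zero 2 c hc).comp
    ((tendsto_pow_atTop two_ne_zero).comp tendsto_inv_nhdsGT_zero)
  refine this.congr fun σ => ?_
  simp only [Function.comp_apply, rpow_two, inv_pow, ← pow_mul, div_eq_mul_inv, neg_mul]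

theorem fisher_blind_to_proportions_small_variance_general (μ₁ μ₂ w w' : ℝ) (hμ : μ₁ < μ₂)
    (hw : w ∈ Set.Ioo (0 : ℝ) 1) (hw' : w' ∈ Set.Ioo (0 : ℝ) 1) :
    Tendsto
      (fun σ => fisherDiv
        (fun y => w * gaussian μ₁ σ y + (1 - w) * gaussian μ₂ σ y)
        (fun y => w' * gaussian μ₁ σ y + (1 - w') * gaussian μ₂ σ y))
      (nhdsWithin 0 (Set.Ioi 0)) (nhds 0) := by
  have hc : 0 < (μ₁ - μ₂) ^ 2 / 8 := by
    have := sub_ne_zero.2 hμ.ne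
    positivity
  have hrate := (tendsto_inv_pow_four_mul_exp_neg_div_sq hc).const_mul
    (((w - w') * (μ₁ - μ₂)) ^ 2 / (min w (1 - w) * min w' (1 - w') ^ 2))
  rw [mul_zero] at hrate
  refine tendsto_of_tendsto_of_tendsto_of_le_of_le' tendsto_const_nhds hrate ?_ ?_
  · filter_upwards [self_mem_nhdsWithin] with σ hσ
    exact fisherDiv_nonneg (fun x => (convex_comb_gaussian_pos hw μ₁ μ₂ hσ x).le) _
  · filter_upwards [self_mem_nhdsWithin] with σ hσ
    exact fisherDiv_convex_comb_gaussian_le hw hw' μ₁ μ₂ hσ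

/-- blindness of score matching to mixing proportions, small-variance
limit: the Fisher divergence between two mixtures that differ only in their mixing
proportion vanishes as `σ → 0⁺`. -/
theorem fisher_blind_to_proportions_small_variance (μ₁ μ₂ w w' : ℝ) (hμ : μ₁ < μ₂)
    (hw : w ∈ Set.Ioo (0 : ℝ) 1) (hw' : w' ∈ Set.Ioo (0 : ℝ) 1) (hne : w ≠ w') :
    Tendsto
      (fun σ => fisherDiv
        (fun y => w * gaussian μ₁ σ y + (1 - w) * gaussian μ₂ σ y)
        (fun y => w' * gaussian μ₁ σ y + (1 - w') * gaussian μ₂ σ y))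
      (nhdsWithin 0 (Set.Ioi 0)) (nhds 0) :=
  fisher_blind_to_proportions_small_variance_general μ₁ μ₂ w w' hμ hw hw'
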